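/- arXiv:2011.10105 — 3 statements merged into one kernel-verified Lean document; each statement's English description precedes it below -/
import Mathlib

section
/- Let B1, B2, B3 be closed unit balls in R^3 whose intersection has nonempty interior and whose three boundary spheres are pairwise distinct and each contributes a nonempty piece to the boundary of the intersection. Then the three boundary unit spheres S1, S2, S3 have exactly two points in common. -/
/-!
When the circumradius `R` of the triangle `x₁x₂x₃` is less than `1`, the three unit spheres meet
exactly in the two points `c ± √(1 - R²) n`, where `c` is the circumcenter and `n` a unit normal
of the plane of the triangle.

Suppose `R ≥ 1` and write `c = ∑ wⱼ xⱼ` in barycentric coordinates. As `c` is equidistant from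
the vertices, no vertex can carry all the positive weight, so for a triangle some vertex `xᵢ` has
the two other weights nonnegative. For `z` on the sphere about `xᵢ` and inside the other two balls,
`‖z - c‖² + R² = ∑ wⱼ ‖z - xⱼ‖² ≤ 1`, hence `z = c`: the sphere about `xᵢ` contributes a single
point to the boundary of the intersection, not an open piece of sphere.
-/

open Metric Module

section WeightedSums

variable {E ι : Type*} [NormedAddCommGroup E] [InnerProductSpace ℝ E] [Fintype ι]
  {p : ι → E} {w : ι → ℝ} {c : E}

theorem sum_smul_sub_eq_zero (hw : ∑ j, w j = 1) (hc : ∑ j, w j • p j = c) :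
    ∑ j, w j • (p j - c) = 0 := by
  simp only [smul_sub, Finset.sum_sub_distrib, ← Finset.sum_smul, hw, one_smul, hc, sub_self]

theorem sum_mul_norm_sub_sq (hw : ∑ j, w j = 1) (hc : ∑ j, w j • p j = c) (z : E) :
    ∑ j, w j * ‖z - p j‖ ^ 2 = ‖z - c‖ ^ 2 + ∑ j, w j * ‖p j - c‖ ^ 2 := by
  have hterm : ∀ j, w j * ‖z - p j‖ ^ 2 =
      w j * ‖z - c‖ ^ 2 - 2 * inner ℝ (z - c) (w j • (p j - c)) + w j * ‖p j - c‖ ^ 2 := by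
    intro j
    rw [show z - p j = (z - c) - (p j - c) by abel, norm_sub_sq_real, real_inner_smul_right]
    ring
  simp only [hterm, Finset.sum_add_distrib, Finset.sum_sub_distrib, ← Finset.sum_mul,
    ← Finset.mul_sum, ← inner_sum, sum_smul_sub_eq_zero hw hc, hw, inner_zero_right]
  ring

theorem exists_ne_pos_of_norm_sub_eq (hw : ∑ j, w j = 1) (hc : ∑ j, w j • p j = c) {R : ℝ}
    (hR : 0 < R) (hpc : ∀ j, ‖p j - c‖ = R) (i : ι) : ∃ j ≠ i, 0 < w j := by
  by_contra! hneg
  have hterm : ∀ j, w j * R ^ 2 ≤ w j * inner ℝ (p i - c) (p j - c) := by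
    intro j
    rcases eq_or_ne j i with rfl | hji
    · rw [real_inner_self_eq_norm_sq, hpc]
    · refine mul_le_mul_of_nonpos_left ?_ (hneg j hji)
      calc inner ℝ (p i - c) (p j - c) ≤ ‖p i - c‖ * ‖p j - c‖ := real_inner_le_norm _ _
        _ = R ^ 2 := by rw [hpc, hpc, sq]
  have hsum := Finset.sum_le_sum (s := Finset.univ) fun j _ => hterm j
  simp only [← Finset.sum_mul, hw, ← real_inner_smul_right, ← inner_sum,
    sum_smul_sub_eq_zero hw hc, inner_zero_right] at hsum
  nlinarith

theorem sphere_inter_iInter_closedBall_subset_singleton (hw : ∑ j, w j = 1)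
    (hc : ∑ j, w j • p j = c) {R r : ℝ} (hpc : ∀ j, ‖p j - c‖ = R) (hrR : r ≤ R) {i : ι}
    (hwi : ∀ j ≠ i, 0 ≤ w j) :
    sphere (p i) r ∩ ⋂ j, closedBall (p j) r ⊆ {c} := by
  rintro z ⟨hzi, hz⟩
  rw [mem_sphere, dist_eq_norm] at hzi
  rw [Set.mem_iInter] at hz
  have hterm : ∀ j, w j * ‖z - p j‖ ^ 2 ≤ w j * r ^ 2 := by
    intro j
    rcases eq_or_ne j i with rfl | hji
    · rw [hzi]
    · have hzj : ‖z - p j‖ ≤ r := by simpa [dist_eq_norm] using hz j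
      exact mul_le_mul_of_nonneg_left (pow_le_pow_left₀ (norm_nonneg _) hzj 2) (hwi j hji)
  have hsum := Finset.sum_le_sum (s := Finset.univ) fun j _ => hterm j
  simp only [sum_mul_norm_sub_sq hw hc, hpc, ← Finset.sum_mul, hw, one_mul] at hsum
  have hr : 0 ≤ r := hzi ▸ norm_nonneg _
  have hzc : ‖z - c‖ ^ 2 ≤ 0 := by nlinarith
  rw [Set.mem_singleton_iff, ← sub_eq_zero, ← norm_eq_zero]
  exact pow_eq_zero_iff two_ne_zero |>.mp (le_antisymm hzc (sq_nonneg _))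

end WeightedSums

theorem Fin.exists_forall_ne_nonneg_of_forall_exists_ne_pos {w : Fin 3 → ℝ}
    (h : ∀ i, ∃ j ≠ i, 0 < w j) : ∃ i, ∀ j ≠ i, 0 ≤ w j := by
  by_contra! hneg
  obtain ⟨j, -, hj⟩ := hneg 0
  obtain ⟨k, hkj, hk⟩ := hneg j
  -- `-j - k` is the third index of `Fin 3`, so every index other than it is `j` or `k`.
  obtain ⟨l, hl, hwl⟩ := h (-j - k)
  grind

theorem exists_mem_sphere_inter_ball_ne {E : Type*} [NormedAddCommGroup E] [NormedSpace ℝ E]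
    (hE : 1 < Module.rank ℝ E) {x y : E} {r ε : ℝ} (hr : 0 < r) (hy : y ∈ sphere x r)
    (hε : 0 < ε) : ∃ z ∈ sphere x r ∩ ball y ε, z ≠ y := by
  by_contra! h
  have hsub := (isPreconnected_iff_subset_of_disjoint.mp (isConnected_sphere hE x hr.le).2)
    (ball y (min ε r)) {y}ᶜ isOpen_ball isOpen_compl_singleton
    (fun z _ => by by_cases hzy : z = y <;> simp [hzy, hε, hr])
    (by
      ext z
      simp only [Set.mem_inter_iff, Set.mem_compl_singleton_iff, Set.mem_empty_iff_false,
        iff_false]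
      exact fun ⟨hz, hzb, hzy⟩ => hzy (h z ⟨hz, ball_subset_ball (min_le_left _ _) hzb⟩))
  rcases hsub with hu | hv
  · have hanti : (2 : ℝ) • x - y ∈ sphere x r := by
      rw [mem_sphere, dist_eq_norm] at hy ⊢
      rw [show (2 : ℝ) • x - y - x = -(y - x) by module, norm_neg, hy]
    have := hu hanti
    rw [mem_ball, dist_eq_norm, show (2 : ℝ) • x - y - y = (-2 : ℝ) • (y - x) by module,
      norm_smul, ← dist_eq_norm, hy] at this
    norm_num at this
    linarith [min_le_right ε r]
  · exact hv hy rfl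

theorem Submodule.encard_inter_sphere_zero_of_finrank_eq_one {E : Type*} [NormedAddCommGroup E]
    [NormedSpace ℝ E] {L : Submodule ℝ E} (hL : finrank ℝ L = 1) {t : ℝ} (ht : 0 < t) :
    ((L : Set E) ∩ sphere 0 t).encard = 2 := by
  obtain ⟨n, hn0, hspan⟩ := finrank_eq_one_iff'.mp hL
  have hn : ‖(n : E)‖ ≠ 0 := by simpa using hn0
  set u : E := (t / ‖(n : E)‖) • (n : E)
  have hu : ‖u‖ = t := by
    rw [norm_smul, norm_div, Real.norm_of_nonneg ht.le, norm_norm, div_mul_cancel₀ _ hn]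
  have hset : (L : Set E) ∩ sphere 0 t = {u, -u} := by
    ext v
    constructor
    · rintro ⟨hvL, hv⟩
      obtain ⟨a, ha⟩ := hspan ⟨v, hvL⟩
      have hv' : v = a • (n : E) := congrArg Subtype.val ha.symm
      rw [mem_sphere_zero_iff_norm, hv', norm_smul, Real.norm_eq_abs] at hv
      rcases abs_eq (div_pos ht (norm_pos_iff.mpr (by simpa using hn0))).le |>.mp
        (eq_div_of_mul_eq hn hv) with h | h
      · left; rw [hv', h]
      · right; rw [hv', h, neg_smul]; rfl
    · rintro (rfl | rfl)
      · exact ⟨L.smul_mem _ n.2, by simp [hu]⟩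
      · exact ⟨L.neg_mem (L.smul_mem _ n.2), by simp [hu]⟩
  rw [hset, Set.encard_pair]
  intro h
  have h2 : ‖u - -u‖ = 0 := by rw [← h, sub_self, norm_zero]
  rw [sub_neg_eq_add, ← two_smul ℝ, norm_smul, hu] at h2
  norm_num at h2
  exact ht.ne' h2

namespace Affine.Simplex

variable {V P : Type*} [NormedAddCommGroup V] [InnerProductSpace ℝ V] [MetricSpace P]
  [NormedAddTorsor V P] {n : ℕ}

theorem forall_dist_eq_iff (s : Simplex ℝ P n) {p : P} {r : ℝ} (hr : 0 ≤ r) :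
    (∀ i, dist p (s.points i) = r) ↔
      p -ᵥ s.circumcenter ∈ (affineSpan ℝ (Set.range s.points)).directionᗮ ∧
        dist p s.circumcenter ^ 2 = r ^ 2 - s.circumradius ^ 2 := by
  constructor
  · intro h
    have h' : ∀ i, dist (s.points i) p = r := fun i => by rw [dist_comm, h]
    have hproj := s.orthogonalProjection_eq_circumcenter_of_dist_eq h'
    refine ⟨?_, ?_⟩
    · rw [← hproj]
      exact EuclideanGeometry.vsub_orthogonalProjection_mem_direction_orthogonal _ p
    · have := s.dist_circumcenter_sq_eq_sq_sub_circumradius h' hproj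
        (mem_affineSpan ℝ (Set.mem_range_self 0))
      rw [sq, sq, sq, this]
  · rintro ⟨horth, hdist⟩ i
    have hproj : (s.orthogonalProjectionSpan p : P) = s.circumcenter := by
      have := EuclideanGeometry.orthogonalProjection_vadd_eq_self
        s.circumcenter_mem_affineSpan horth
      rw [vsub_vadd] at this
      exact congrArg Subtype.val this
    have := s.dist_sq_eq_dist_orthogonalProjection_sq_add_dist_orthogonalProjection_sq p
      (mem_affineSpan ℝ (Set.mem_range_self i))
    rw [hproj, s.dist_circumcenter_eq_circumradius] at this
    rw [dist_comm, ← pow_left_inj₀ dist_nonneg hr two_ne_zero]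
    nlinarith

theorem encard_setOf_forall_dist_eq [FiniteDimensional ℝ V] (s : Simplex ℝ P n)
    (hV : finrank ℝ V = n + 1) {r : ℝ} (hr : s.circumradius < r) :
    {p | ∀ i, dist p (s.points i) = r}.encard = 2 := by
  set L := (affineSpan ℝ (Set.range s.points)).directionᗮ
  have hL : finrank ℝ L = 1 := by
    refine Submodule.finrank_add_finrank_orthogonal' ?_
    rw [direction_affineSpan, s.independent.finrank_vectorSpan (Fintype.card_fin _), hV]
  have hr0 : 0 ≤ r := s.circumradius_nonneg.trans hr.le
  have hRr : s.circumradius ^ 2 < r ^ 2 := pow_lt_pow_left₀ hr s.circumradius_nonneg two_ne_zero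
  have hset : {p | ∀ i, dist p (s.points i) = r} = Equiv.vaddConst s.circumcenter ''
      ((L : Set V) ∩ sphere 0 √(r ^ 2 - s.circumradius ^ 2)) := by
    ext p
    rw [Equiv.image_eq_preimage_symm]
    simp only [Set.mem_ofPred_eq, s.forall_dist_eq_iff hr0, Set.mem_preimage,
      Equiv.coe_vaddConst_symm, Set.mem_inter_iff, SetLike.mem_coe, mem_sphere_zero_iff_norm,
      ← dist_eq_norm_vsub, eq_comm (a := dist p _),
      Real.sqrt_eq_iff_eq_sq (sub_nonneg.mpr hRr.le) dist_nonneg]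
    exact and_congr Iff.rfl eq_comm
  rw [hset, (Equiv.injective _).encard_image,
    Submodule.encard_inter_sphere_zero_of_finrank_eq_one hL (Real.sqrt_pos.mpr (sub_pos.mpr hRr))]

theorem circumradius_lt_of_sphere_inter_ball_subset {E : Type*} [NormedAddCommGroup E]
    [InnerProductSpace ℝ E] (hE : 1 < Module.rank ℝ E) (s : Simplex ℝ E 2) {r : ℝ} (hr : 0 < r)
    (hface : ∀ i, ∃ y ∈ sphere (s.points i) r, ∃ ε > 0,
      sphere (s.points i) r ∩ ball y ε ⊆ ⋂ j, closedBall (s.points j) r) :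
    s.circumradius < r := by
  by_contra! hrR
  obtain ⟨w, hw, hc⟩ :=
    eq_affineCombination_of_mem_affineSpan_of_fintype s.circumcenter_mem_affineSpan
  rw [Finset.affineCombination_eq_linear_combination _ _ _ hw] at hc
  have hpc : ∀ j, ‖s.points j - s.circumcenter‖ = s.circumradius := fun j => by
    rw [← dist_eq_norm, s.dist_circumcenter_eq_circumradius]
  obtain ⟨i, hwi⟩ := Fin.exists_forall_ne_nonneg_of_forall_exists_ne_pos
    (exists_ne_pos_of_norm_sub_eq hw hc.symm s.circumradius_pos hpc)
  have hcap := sphere_inter_iInter_closedBall_subset_singleton hw hc.symm hpc hrR hwi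
  obtain ⟨y, hy, ε, hε, hyε⟩ := hface i
  obtain ⟨z, hz, hzy⟩ := exists_mem_sphere_inter_ball_ne hE hr hy hε
  have hyc : y = s.circumcenter := hcap ⟨hy, hyε ⟨hy, mem_ball_self hε⟩⟩
  have hzc : z = s.circumcenter := hcap ⟨hz.1, hyε hz⟩
  exact hzy (hzc.trans hyc.symm)

end Affine.Simplex

theorem three_unit_balls_two_vertices_general
    (x1 x2 x3 : EuclideanSpace ℝ (Fin 3))
    (hcol : ¬ Collinear ℝ ({x1, x2, x3} : Set (EuclideanSpace ℝ (Fin 3))))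
    (K : Set (EuclideanSpace ℝ (Fin 3)))
    (hK : K = Metric.closedBall x1 1 ∩ Metric.closedBall x2 1 ∩ Metric.closedBall x3 1)
    (hface : ∀ x ∈ ({x1, x2, x3} : Set (EuclideanSpace ℝ (Fin 3))),
      ∃ y ∈ Metric.sphere x 1 ∩ frontier K, ∃ ε > 0,
        Metric.sphere x 1 ∩ Metric.ball y ε ⊆ frontier K) :
    (Metric.sphere x1 1 ∩ Metric.sphere x2 1 ∩ Metric.sphere x3 1).encard = 2 := by
  let s : Affine.Simplex ℝ (EuclideanSpace ℝ (Fin 3)) 2 :=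
    ⟨![x1, x2, x3], affineIndependent_iff_not_collinear_set.mpr hcol⟩
  have hK' : K = ⋂ j, closedBall (s.points j) 1 := by
    rw [hK]; ext; simp [s, Fin.forall_fin_succ, and_assoc]
  have hKclosed : IsClosed K := hK' ▸ isClosed_iInter fun _ => isClosed_closedBall
  have hfaces : ∀ i, ∃ y ∈ sphere (s.points i) 1, ∃ ε > 0,
      sphere (s.points i) 1 ∩ ball y ε ⊆ ⋂ j, closedBall (s.points j) 1 := by
    intro i
    obtain ⟨y, hy, ε, hε, hsub⟩ := hface (s.points i) (by fin_cases i <;> simp [s])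
    exact ⟨y, hy.1, ε, hε, hK' ▸ hsub.trans hKclosed.frontier_subset⟩
  have hR := s.circumradius_lt_of_sphere_inter_ball_subset
    (by rw [← Module.finrank_eq_rank, finrank_euclideanSpace_fin]; norm_num) one_pos hfaces
  have hspheres :
      sphere x1 1 ∩ sphere x2 1 ∩ sphere x3 1 = {p | ∀ i, dist p (s.points i) = 1} := by
    ext; simp [s, Fin.forall_fin_succ, and_assoc, dist_eq_norm]
  rw [hspheres, s.encard_setOf_forall_dist_eq (by simp) hR]

/-- Three closed unit balls in ℝ³ with distinct, pairwise-close,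
non-collinear centers, whose intersection has nonempty interior and where each
bounding sphere contributes a piece with nonempty relative interior to the
boundary of the intersection, have bounding spheres meeting in exactly two points. -/
theorem three_unit_balls_two_vertices
    (x1 x2 x3 : EuclideanSpace ℝ (Fin 3))
    (h12 : x1 ≠ x2) (h13 : x1 ≠ x3) (h23 : x2 ≠ x3)
    (hd12 : dist x1 x2 < 2) (hd13 : dist x1 x3 < 2) (hd23 : dist x2 x3 < 2)
    (hcol : ¬ Collinear ℝ ({x1, x2, x3} : Set (EuclideanSpace ℝ (Fin 3))))
    (K : Set (EuclideanSpace ℝ (Fin 3)))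
    (hK : K = Metric.closedBall x1 1 ∩ Metric.closedBall x2 1 ∩ Metric.closedBall x3 1)
    (hint : (interior K).Nonempty)
    (hface : ∀ x ∈ ({x1, x2, x3} : Set (EuclideanSpace ℝ (Fin 3))),
      ∃ y ∈ Metric.sphere x 1 ∩ frontier K, ∃ ε > 0,
        Metric.sphere x 1 ∩ Metric.ball y ε ⊆ frontier K) :
    (Metric.sphere x1 1 ∩ Metric.sphere x2 1 ∩ Metric.sphere x3 1).encard = 2 :=
  three_unit_balls_two_vertices_general x1 x2 x3 hcol K hK hface
end

section
/- Let D1, D2, D3 be closed unit disks in R^2 with non-collinear centers A, B, C such that D1 ∩ D2 ∩ D3 has nonempty interior and each bounding circle contributes an arc to its boundary. Then the circumcenter p of the triangle ABC lies in the interior of D1 ∩ D2 ∩ D3. -/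
/-!
Pick a vertex `X` of the triangle whose two other angles are non-obtuse (at most one angle is
obtuse), and call the other vertices `Y`, `Z`. Then `p - X` is a nonnegative combination of
`Y - X` and `Z - X`, and `⟪Y - X, p - X⟫ = ‖Y - X‖² / 2`, `⟪Z - X, p - X⟫ = ‖Z - X‖² / 2`.
The arc contributed by the circle about `X` contains a point `y` lying strictly inside the disks
about `Y` and `Z`: a point of the arc on the circle about `Y` could be slid along the arc out of
that disk. Strictness reads `⟪Y - X, y - X⟫ > ‖Y - X‖² / 2`, and likewise for `Z`, so
`‖p - X‖² < ⟪p - X, y - X⟫ ≤ ‖p - X‖`, i.e. `dist p X < 1`; `p` is equidistant from the centers.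
-/
open RealInnerProductSpace Module Metric

namespace CircumcenterDiskPolygon

variable {E : Type*} [NormedAddCommGroup E] [InnerProductSpace ℝ E]

lemma dist_sq_eq_dist_sq_add_norm_sq_sub_two_inner (X Y z : E) :
    dist z Y ^ 2 = dist z X ^ 2 + ‖Y - X‖ ^ 2 - 2 * ⟪Y - X, z - X⟫ := by
  rw [dist_eq_norm, dist_eq_norm, show z - Y = (z - X) - (Y - X) by abel, norm_sub_sq_real,
    real_inner_comm]
  ring

lemma inner_eq_half_norm_sq_of_dist_eq {X Y p : E} (h : dist p X = dist p Y) :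
    ⟪Y - X, p - X⟫ = ‖Y - X‖ ^ 2 / 2 := by
  linarith [dist_sq_eq_dist_sq_add_norm_sq_sub_two_inner X Y p, congrArg (· ^ 2) h]

lemma dist_le_one_iff_of_dist_eq_one {X Y z : E} (hz : dist z X = 1) :
    dist z Y ≤ 1 ↔ ‖Y - X‖ ^ 2 / 2 ≤ ⟪Y - X, z - X⟫ := by
  rw [← sq_le_one_iff₀ dist_nonneg, dist_sq_eq_dist_sq_add_norm_sq_sub_two_inner X Y z, hz]
  constructor <;> intro h <;> linarith

lemma dist_lt_one_iff_of_dist_eq_one {X Y z : E} (hz : dist z X = 1) :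
    dist z Y < 1 ↔ ‖Y - X‖ ^ 2 / 2 < ⟪Y - X, z - X⟫ := by
  rw [← sq_lt_one_iff₀ dist_nonneg, dist_sq_eq_dist_sq_add_norm_sq_sub_two_inner X Y z, hz]
  constructor <;> intro h <;> linarith

lemma inner_sub_add_inner_sub_eq_norm_sq (X Y Z : E) :
    ⟪Y - X, Z - X⟫ + ⟪X - Y, Z - Y⟫ = ‖Y - X‖ ^ 2 := by
  rw [← neg_sub Y X, inner_neg_left, ← sub_eq_add_neg, ← inner_sub_right,
    show Z - X - (Z - Y) = Y - X by abel, real_inner_self_eq_norm_sq]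

lemma inner_sub_nonneg_of_inner_sub_neg {X Y Z : E} (h : ⟪X - Y, Z - Y⟫ < 0) :
    0 ≤ ⟪Y - X, Z - X⟫ := by
  nlinarith [inner_sub_add_inner_sub_eq_norm_sq X Y Z, sq_nonneg ‖Y - X‖]

lemma norm_smul_add_smul_sq {d e : E} (hd : ‖d‖ = 1) (he : ‖e‖ = 1) (hde : ⟪d, e⟫ = 0)
    (x y : ℝ) : ‖x • d + y • e‖ ^ 2 = x ^ 2 + y ^ 2 := by
  rw [norm_add_sq_real, norm_smul, norm_smul, real_inner_smul_left, real_inner_smul_right, hd,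
    he, hde, Real.norm_eq_abs, Real.norm_eq_abs]
  simp [sq_abs]

lemma exists_norm_eq_one_near_inner_lt {a d e : E} (hd : ‖d‖ = 1) (he : ‖e‖ = 1)
    (hde : ⟪d, e⟫ = 0) (ha : 0 < ⟪a, d⟫) {ε : ℝ} (hε : 0 < ε) :
    ∃ w, ‖w‖ = 1 ∧ ‖w - d‖ < ε ∧ ⟪a, w⟫ < ⟪a, d⟫ := by
  set δ := min 1 (ε ^ 2 / 4)
  have hδ : 0 < δ := by positivity
  have hδ1 : δ ≤ 1 := min_le_left _ _
  have hδε : δ ≤ ε ^ 2 / 4 := min_le_right _ _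
  set s := √(1 - (1 - δ) ^ 2)
  have hs0 : 0 ≤ s := Real.sqrt_nonneg _
  have hs : s ^ 2 = 1 - (1 - δ) ^ 2 := Real.sq_sqrt (by nlinarith)
  -- `w = (1 - δ) • d + t • e` lies on the unit sphere, at distance `√(2δ)` from `d`
  obtain ⟨t, ht, hat⟩ : ∃ t : ℝ, t ^ 2 = s ^ 2 ∧ t * ⟪a, e⟫ ≤ 0 := by
    rcases le_total 0 ⟪a, e⟫ with h | h
    · exact ⟨-s, by ring, by nlinarith⟩
    · exact ⟨s, rfl, by nlinarith⟩
  refine ⟨(1 - δ) • d + t • e, ?_, ?_, ?_⟩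
  · refine (pow_left_inj₀ (norm_nonneg _) zero_le_one two_ne_zero).1 ?_
    rw [norm_smul_add_smul_sq hd he hde]
    linarith
  · refine lt_of_pow_lt_pow_left₀ 2 hε.le ?_
    rw [show (1 - δ) • d + t • e - d = (-δ) • d + t • e by module, norm_smul_add_smul_sq hd he hde]
    nlinarith
  · rw [inner_add_right, real_inner_smul_right, real_inner_smul_right]
    nlinarith

lemma linearIndependent_sub_of_not_collinear {X Y Z : E}
    (h : ¬ Collinear ℝ ({X, Y, Z} : Set E)) : LinearIndependent ℝ ![Y - X, Z - X] := by
  have hXY : Y - X ≠ 0 := by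
    intro hXY
    rw [sub_eq_zero.1 hXY] at h
    exact h (by simpa using collinear_pair ℝ X Z)
  refine (LinearIndependent.pair_iff' hXY).2 fun t ht => h ?_
  have hZ : Z ∈ line[ℝ, X, Y] := by
    rw [show Z = AffineMap.lineMap X Y t by
      rw [AffineMap.lineMap_apply, vsub_eq_sub, ht, vadd_eq_add, sub_add_cancel]]
    exact AffineMap.lineMap_mem_affineSpan_pair t X Y
  have hcol := collinear_insert_of_mem_affineSpan_pair hZ
  rwa [Set.insert_comm, Set.pair_comm] at hcol

lemma sq_inner_lt_of_linearIndependent {a b : E} (h : LinearIndependent ℝ ![a, b]) :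
    ⟪a, b⟫ ^ 2 < ‖a‖ ^ 2 * ‖b‖ ^ 2 := by
  have ha : a ≠ 0 := by simpa using h.ne_zero 0
  have hb : b ≠ 0 := by simpa using h.ne_zero 1
  have hlt : |⟪a, b⟫| < ‖a‖ * ‖b‖ := by
    refine lt_of_le_of_ne (abs_real_inner_le_norm a b) fun heq => ?_
    obtain ⟨r, -, rfl⟩ := (norm_inner_eq_norm_iff (𝕜 := ℝ) ha hb).1 (by rwa [Real.norm_eq_abs])
    exact (LinearIndependent.pair_iff' ha).1 h r rfl
  rw [← sq_abs, ← mul_pow]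
  exact pow_lt_pow_left₀ hlt (abs_nonneg _) two_ne_zero

variable [Fact (finrank ℝ E = 2)]

attribute [local instance] FiniteDimensional.of_fact_finrank_eq_two

lemma exists_norm_eq_one_inner_eq_zero {d : E} (hd : ‖d‖ = 1) :
    ∃ e : E, ‖e‖ = 1 ∧ ⟪d, e⟫ = 0 := by
  let o : Orientation ℝ E (Fin 2) := (finBasisOfFinrankEq ℝ E Fact.out).orientation
  exact ⟨o.rightAngleRotation d, by simpa using hd, by simp⟩

lemma dist_lt_one_of_sphere_inter_ball_subset {X Y y : E} (hXY : X ≠ Y) (hy : y ∈ sphere X 1)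
    {ε : ℝ} (hε : 0 < ε) (harc : sphere X 1 ∩ ball y ε ⊆ closedBall Y 1) : dist y Y < 1 := by
  have hd : ‖y - X‖ = 1 := by rwa [← dist_eq_norm]
  have harc' : ∀ w : E, ‖w‖ = 1 → ‖w - (y - X)‖ < ε → ‖Y - X‖ ^ 2 / 2 ≤ ⟪Y - X, w⟫ := by
    intro w hw hwy
    have hwX : dist (w + X) X = 1 := by simpa [dist_eq_norm] using hw
    have hwy' : w + X ∈ ball y ε := by
      rw [mem_ball, dist_eq_norm]; rwa [show w + X - y = w - (y - X) by abel]
    simpa using (dist_le_one_iff_of_dist_eq_one hwX).1 (harc ⟨hwX, hwy'⟩)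
  rw [dist_lt_one_iff_of_dist_eq_one hy]
  refine lt_of_le_of_ne (harc' _ hd (by simpa using hε)) fun heq => ?_
  have hpos : 0 < ⟪Y - X, y - X⟫ := by
    rw [← heq]
    have := sub_ne_zero.2 hXY.symm
    positivity
  obtain ⟨e, he, hde⟩ := exists_norm_eq_one_inner_eq_zero hd
  obtain ⟨w, hw, hwy, hlt⟩ := exists_norm_eq_one_near_inner_lt hd he hde hpos hε
  exact (harc' w hw hwy).not_gt (heq ▸ hlt)

lemma exists_nonneg_smul_add_smul_eq {a b v : E} (hab : LinearIndependent ℝ ![a, b])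
    (ha : ⟪a, b⟫ ≤ ‖a‖ ^ 2) (hb : ⟪a, b⟫ ≤ ‖b‖ ^ 2)
    (hva : ⟪a, v⟫ = ‖a‖ ^ 2 / 2) (hvb : ⟪b, v⟫ = ‖b‖ ^ 2 / 2) :
    ∃ β γ : ℝ, 0 ≤ β ∧ 0 ≤ γ ∧ β • a + γ • b = v := by
  have hv : v ∈ Submodule.span ℝ {a, b} := by
    rw [← Matrix.range_cons_cons_empty a b ![],
      hab.span_eq_top_of_card_eq_finrank' (by simp [(Fact.out : finrank ℝ E = 2)])]
    trivial
  obtain ⟨β, γ, rfl⟩ := Submodule.mem_span_pair.1 hv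
  rw [inner_add_right, real_inner_smul_right, real_inner_smul_right,
    real_inner_self_eq_norm_sq] at hva hvb
  rw [real_inner_comm a b] at hvb
  have hD := sq_inner_lt_of_linearIndependent hab
  -- Cramer's rule for the Gram system
  refine ⟨β, γ, ?_, ?_, rfl⟩
  · have : β * (‖a‖ ^ 2 * ‖b‖ ^ 2 - ⟪a, b⟫ ^ 2) = ‖b‖ ^ 2 * (‖a‖ ^ 2 - ⟪a, b⟫) / 2 := by
      linear_combination ‖b‖ ^ 2 * hva - ⟪a, b⟫ * hvb
    nlinarith [sq_nonneg ‖b‖]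
  · have : γ * (‖a‖ ^ 2 * ‖b‖ ^ 2 - ⟪a, b⟫ ^ 2) = ‖a‖ ^ 2 * (‖b‖ ^ 2 - ⟪a, b⟫) / 2 := by
      linear_combination ‖a‖ ^ 2 * hvb - ⟪a, b⟫ * hva
    nlinarith [sq_nonneg ‖a‖]

lemma norm_lt_one_of_half_norm_sq_lt_inner {a b v d : E} (hab : LinearIndependent ℝ ![a, b])
    (ha : ⟪a, b⟫ ≤ ‖a‖ ^ 2) (hb : ⟪a, b⟫ ≤ ‖b‖ ^ 2)
    (hva : ⟪a, v⟫ = ‖a‖ ^ 2 / 2) (hvb : ⟪b, v⟫ = ‖b‖ ^ 2 / 2) (hd : ‖d‖ = 1)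
    (hda : ‖a‖ ^ 2 / 2 < ⟪a, d⟫) (hdb : ‖b‖ ^ 2 / 2 < ⟪b, d⟫) : ‖v‖ < 1 := by
  obtain ⟨β, γ, hβ, hγ, hv⟩ := exists_nonneg_smul_add_smul_eq hab ha hb hva hvb
  rcases eq_or_ne v 0 with rfl | hv0
  · simp
  have hβγ : 0 < β ∨ 0 < γ := by
    by_contra! h
    rw [le_antisymm h.1 hβ, le_antisymm h.2 hγ, zero_smul, zero_smul, add_zero] at hv
    exact hv0 hv.symm
  have hvv : ‖v‖ ^ 2 = β * ⟪a, v⟫ + γ * ⟪b, v⟫ := by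
    rw [← real_inner_self_eq_norm_sq]
    nth_rw 1 [← hv]
    rw [inner_add_left, real_inner_smul_left, real_inner_smul_left]
  have hvd : ⟪v, d⟫ = β * ⟪a, d⟫ + γ * ⟪b, d⟫ := by
    rw [← hv, inner_add_left, real_inner_smul_left, real_inner_smul_left]
  have hlt : ‖v‖ ^ 2 < ⟪v, d⟫ := by
    rcases hβγ with h | h <;> nlinarith
  have hle : ⟪v, d⟫ ≤ ‖v‖ := by simpa [hd] using real_inner_le_norm v d
  nlinarith [norm_pos_iff.2 hv0]

def HasUnitArcIn (X : E) (s : Set E) : Prop :=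
  ∃ y ∈ sphere X 1, ∃ ε > 0, sphere X 1 ∩ ball y ε ⊆ s

lemma dist_lt_one_of_hasUnitArcIn {X Y Z p : E} (hcol : ¬ Collinear ℝ ({X, Y, Z} : Set E))
    (hY : 0 ≤ ⟪X - Y, Z - Y⟫) (hZ : 0 ≤ ⟪X - Z, Y - Z⟫)
    (hpY : dist p X = dist p Y) (hpZ : dist p X = dist p Z)
    (harc : HasUnitArcIn X (closedBall Y 1 ∩ closedBall Z 1)) : dist p X < 1 := by
  obtain ⟨y, hy, ε, hε, hsub⟩ := harc
  have hli := linearIndependent_sub_of_not_collinear hcol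
  have hXY : X ≠ Y := (sub_ne_zero.1 (by simpa using hli.ne_zero 0)).symm
  have hXZ : X ≠ Z := (sub_ne_zero.1 (by simpa using hli.ne_zero 1)).symm
  have hyY := dist_lt_one_of_sphere_inter_ball_subset hXY hy hε (hsub.trans Set.inter_subset_left)
  have hyZ := dist_lt_one_of_sphere_inter_ball_subset hXZ hy hε (hsub.trans Set.inter_subset_right)
  rw [dist_eq_norm]
  refine norm_lt_one_of_half_norm_sq_lt_inner hli ?_ ?_ (inner_eq_half_norm_sq_of_dist_eq hpY)
    (inner_eq_half_norm_sq_of_dist_eq hpZ) (by rwa [← dist_eq_norm])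
    ((dist_lt_one_iff_of_dist_eq_one hy).1 hyY) ((dist_lt_one_iff_of_dist_eq_one hy).1 hyZ)
  · linarith [inner_sub_add_inner_sub_eq_norm_sq X Y Z]
  · linarith [inner_sub_add_inner_sub_eq_norm_sq X Z Y, real_inner_comm (Y - X) (Z - X)]

lemma dist_lt_one_of_hasUnitArcIn_triangle {A B C p : E}
    (hcol : ¬ Collinear ℝ ({A, B, C} : Set E))
    (hpA : dist p A = dist p B) (hpB : dist p B = dist p C)
    (harcA : HasUnitArcIn A (closedBall B 1 ∩ closedBall C 1))
    (harcB : HasUnitArcIn B (closedBall A 1 ∩ closedBall C 1))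
    (harcC : HasUnitArcIn C (closedBall A 1 ∩ closedBall B 1)) : dist p A < 1 := by
  -- work at a vertex whose two neighbouring angles are non-obtuse
  by_cases hB : 0 ≤ ⟪A - B, C - B⟫
  · by_cases hC : 0 ≤ ⟪A - C, B - C⟫
    · exact dist_lt_one_of_hasUnitArcIn hcol hB hC hpA (hpA.trans hpB) harcA
    · have hCAB : ¬ Collinear ℝ ({C, A, B} : Set E) := by
        rwa [Set.insert_comm C A, Set.pair_comm C B]
      have hC' := dist_lt_one_of_hasUnitArcIn hCAB
        (inner_sub_nonneg_of_inner_sub_neg (not_le.1 hC)) (real_inner_comm (A - B) (C - B) ▸ hB)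
        (hpA.trans hpB).symm hpB.symm harcC
      rwa [hpA, hpB]
  · have hBAC : ¬ Collinear ℝ ({B, A, C} : Set E) := by
      rwa [Set.insert_comm B A]
    have hB' := dist_lt_one_of_hasUnitArcIn hBAC (inner_sub_nonneg_of_inner_sub_neg (not_le.1 hB))
      (inner_sub_nonneg_of_inner_sub_neg (real_inner_comm (A - B) (C - B) ▸ not_le.1 hB))
      hpA.symm hpB harcB
    rwa [hpA]

end CircumcenterDiskPolygon

open CircumcenterDiskPolygon

theorem circumcenter_in_disk_polygon_general
    (A B C : EuclideanSpace ℝ (Fin 2))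
    (hcol : ¬ Collinear ℝ ({A, B, C} : Set (EuclideanSpace ℝ (Fin 2))))
    (K : Set (EuclideanSpace ℝ (Fin 2)))
    (hK : K = Metric.closedBall A 1 ∩ Metric.closedBall B 1 ∩ Metric.closedBall C 1)
    (hface : ∀ c ∈ ({A, B, C} : Set (EuclideanSpace ℝ (Fin 2))),
      ∃ y ∈ Metric.sphere c 1 ∩ frontier K, ∃ ε > 0,
        Metric.sphere c 1 ∩ Metric.ball y ε ⊆ frontier K)
    (p : EuclideanSpace ℝ (Fin 2))
    (hpA : dist p A = dist p B) (hpB : dist p B = dist p C) :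
    p ∈ interior K := by
  have : Fact (finrank ℝ (EuclideanSpace ℝ (Fin 2)) = 2) := ⟨finrank_euclideanSpace_fin⟩
  have harc : ∀ X ∈ ({A, B, C} : Set _), ∀ Y Z, K ⊆ closedBall Y 1 ∩ closedBall Z 1 →
      HasUnitArcIn X (closedBall Y 1 ∩ closedBall Z 1) := by
    intro X hX Y Z hKYZ
    obtain ⟨y, hy, ε, hε, hsub⟩ := hface X hX
    have hKc : IsClosed K :=
      hK ▸ (isClosed_closedBall.inter isClosed_closedBall).inter isClosed_closedBall
    exact ⟨y, hy.1, ε, hε, hsub.trans (hKc.frontier_subset.trans hKYZ)⟩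
  subst hK
  have hA : dist p A < 1 := dist_lt_one_of_hasUnitArcIn_triangle hcol hpA hpB
    (harc A (by simp) B C fun x hx => ⟨hx.1.2, hx.2⟩)
    (harc B (by simp) A C fun x hx => ⟨hx.1.1, hx.2⟩)
    (harc C (by simp) A B fun x hx => hx.1)
  rw [interior_inter, interior_inter, interior_closedBall A one_ne_zero,
    interior_closedBall B one_ne_zero, interior_closedBall C one_ne_zero]
  simp only [Set.mem_inter_iff, mem_ball, ← hpB, ← hpA, hA, and_self]

/-- For three closed unit disks in ℝ² with non-collinear centers whose
intersection has nonempty interior and each of whose bounding circles contributes a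
nondegenerate arc to the boundary of the intersection, the circumcenter of the
triangle of centers lies in the interior of the intersection. -/
theorem circumcenter_in_disk_polygon
    (A B C : EuclideanSpace ℝ (Fin 2))
    (hcol : ¬ Collinear ℝ ({A, B, C} : Set (EuclideanSpace ℝ (Fin 2))))
    (K : Set (EuclideanSpace ℝ (Fin 2)))
    (hK : K = Metric.closedBall A 1 ∩ Metric.closedBall B 1 ∩ Metric.closedBall C 1)
    (hint : (interior K).Nonempty)
    (hface : ∀ c ∈ ({A, B, C} : Set (EuclideanSpace ℝ (Fin 2))),
      ∃ y ∈ Metric.sphere c 1 ∩ frontier K, ∃ ε > 0,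
        Metric.sphere c 1 ∩ Metric.ball y ε ⊆ frontier K)
    (p : EuclideanSpace ℝ (Fin 2))
    (hpA : dist p A = dist p B) (hpB : dist p B = dist p C) :
    p ∈ interior K :=
  circumcenter_in_disk_polygon_general A B C hcol K hK hface p hpA hpB
end

section
/- Let x1, x2, x3 in R^3 be pairwise at distance less than 2, and let p be a point lying on all three unit spheres S(x1), S(x2), S(x3). If x1, x2, x3 are not collinear, then there are exactly two points in S(x1) ∩ S(x2) ∩ S(x3) or exactly one (the latter occurring only when p lies in the affine plane spanned by x1, x2, x3); in particular S(x1) ∩ S(x2) ∩ S(x3) has at most two points. -/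
/-!
If `q` is a second common point of the spheres, each centre is equidistant from `p` and `q`, so
the plane through the three centres lies in the perpendicular bisector of `p` and `q`. Both are
planes, hence they coincide and `q` is the mirror image of `p` in the plane of the centres.
Conversely that mirror image `p'` lies on all three spheres, so the intersection is `{p, p'}`,
a single point exactly when `p` lies in the plane.
-/

open EuclideanGeometry AffineSubspace Module

variable {V P : Type*} [NormedAddCommGroup V] [InnerProductSpace ℝ V] [MetricSpace P]
  [NormedAddTorsor V P]

theorem AffineSubspace.eq_perpBisector_of_le {s : AffineSubspace ℝ P} [Nonempty s]
    [s.direction.HasOrthogonalProjection] (hs : finrank ℝ s.directionᗮ = 1) {p q : P}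
    (hpq : p ≠ q) (hle : s ≤ perpBisector p q) : s = perpBisector p q := by
  have : FiniteDimensional ℝ s.directionᗮ := .of_finrank_pos (by omega)
  have hdir : s.direction ≤ (ℝ ∙ (q -ᵥ p))ᗮ := direction_perpBisector p q ▸ direction_le hle
  have hspan : ℝ ∙ (q -ᵥ p) = s.directionᗮ :=
    Submodule.eq_of_le_of_finrank_eq
      ((Submodule.le_orthogonal_orthogonal _).trans (Submodule.orthogonal_le hdir))
      (by rw [finrank_span_singleton (vsub_ne_zero.2 hpq.symm), hs])
  obtain ⟨x⟩ := ‹Nonempty s›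
  refine ext_of_direction_eq ?_ ⟨x, x.2, hle x.2⟩
  rw [direction_perpBisector, hspan, Submodule.orthogonal_orthogonal]

theorem EuclideanGeometry.reflection_eq_of_eq_perpBisector {s : AffineSubspace ℝ P} [Nonempty s]
    [s.direction.HasOrthogonalProjection] {p q : P} (h : s = perpBisector p q) :
    reflection s p = q := by
  set m := midpoint ℝ p q
  have hm : m ∈ s := h ▸ midpoint_mem_perpBisector p q
  have hv : p -ᵥ m ∈ s.directionᗮ := by
    rw [h, direction_perpBisector, left_vsub_midpoint]
    refine Submodule.le_orthogonal_orthogonal _ (Submodule.mem_span_singleton.2 ⟨-⅟2, ?_⟩)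
    rw [neg_smul, ← smul_neg, neg_vsub_eq_vsub_rev]
  rw [← vsub_vadd p m, reflection_orthogonal_vadd hm hv, neg_vsub_eq_vsub_rev]
  exact Equiv.pointReflection_midpoint_left p q

theorem EuclideanGeometry.eq_or_eq_reflection_of_le_perpBisector {s : AffineSubspace ℝ P}
    [Nonempty s] [s.direction.HasOrthogonalProjection] (hs : finrank ℝ s.directionᗮ = 1)
    {p q : P} (hle : s ≤ perpBisector p q) : q = p ∨ q = reflection s p := by
  rcases eq_or_ne p q with rfl | hpq
  · exact .inl rfl
  · exact .inr (reflection_eq_of_eq_perpBisector (s.eq_perpBisector_of_le hs hpq hle)).symm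

theorem finrank_orthogonal_direction_affineSpan_eq_one_of_not_collinear [FiniteDimensional ℝ V]
    (hV : finrank ℝ V = 3) {x₁ x₂ x₃ : P} (h : ¬ Collinear ℝ {x₁, x₂, x₃}) :
    finrank ℝ (affineSpan ℝ {x₁, x₂, x₃}).directionᗮ = 1 := by
  have h2 :=
    (affineIndependent_iff_not_collinear_set.2 h).finrank_vectorSpan (n := 2) (Fintype.card_fin 3)
  rw [Matrix.range_cons, Matrix.range_cons, Matrix.range_cons, Matrix.range_empty, Set.union_empty,
    Set.singleton_union, Set.singleton_union] at h2
  have := Submodule.finrank_add_finrank_orthogonal (vectorSpan ℝ {x₁, x₂, x₃})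
  rw [direction_affineSpan]
  omega

theorem EuclideanGeometry.mem_perpBisector_of_mem_sphere {x p q : P} {r : ℝ}
    (hp : p ∈ Metric.sphere x r) (hq : q ∈ Metric.sphere x r) : x ∈ perpBisector p q :=
  mem_perpBisector_iff_dist_eq'.2 (hp.trans hq.symm)

theorem EuclideanGeometry.reflection_mem_sphere {s : AffineSubspace ℝ P} [Nonempty s]
    [s.direction.HasOrthogonalProjection] {x p : P} {r : ℝ} (hx : x ∈ s)
    (hp : p ∈ Metric.sphere x r) : reflection s p ∈ Metric.sphere x r := by
  rw [Metric.mem_sphere', dist_reflection_eq_of_mem s hx, ← Metric.mem_sphere']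
  exact hp

theorem EuclideanGeometry.sphere_inter_sphere_inter_sphere_eq_pair [FiniteDimensional ℝ V]
    (hV : finrank ℝ V = 3) {x₁ x₂ x₃ p : P} {r₁ r₂ r₃ : ℝ} (h : ¬ Collinear ℝ {x₁, x₂, x₃})
    (hp₁ : p ∈ Metric.sphere x₁ r₁) (hp₂ : p ∈ Metric.sphere x₂ r₂)
    (hp₃ : p ∈ Metric.sphere x₃ r₃) :
    Metric.sphere x₁ r₁ ∩ Metric.sphere x₂ r₂ ∩ Metric.sphere x₃ r₃ =
      {p, reflection (affineSpan ℝ {x₁, x₂, x₃}) p} := by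
  ext q
  constructor
  · rintro ⟨⟨hq₁, hq₂⟩, hq₃⟩
    refine eq_or_eq_reflection_of_le_perpBisector
      (finrank_orthogonal_direction_affineSpan_eq_one_of_not_collinear hV h) (affineSpan_le.2 ?_)
    rintro x (rfl | rfl | rfl)
    exacts [mem_perpBisector_of_mem_sphere hp₁ hq₁, mem_perpBisector_of_mem_sphere hp₂ hq₂,
      mem_perpBisector_of_mem_sphere hp₃ hq₃]
  · rintro (rfl | rfl)
    · exact ⟨⟨hp₁, hp₂⟩, hp₃⟩
    · exact ⟨⟨reflection_mem_sphere (mem_affineSpan ℝ (by simp)) hp₁,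
        reflection_mem_sphere (mem_affineSpan ℝ (by simp)) hp₂⟩,
        reflection_mem_sphere (mem_affineSpan ℝ (by simp)) hp₃⟩

theorem three_unit_spheres_at_most_two_points_general
    (x1 x2 x3 p : EuclideanSpace ℝ (Fin 3))
    (hp1 : p ∈ Metric.sphere x1 1) (hp2 : p ∈ Metric.sphere x2 1)
    (hp3 : p ∈ Metric.sphere x3 1)
    (hcol : ¬ Collinear ℝ ({x1, x2, x3} : Set (EuclideanSpace ℝ (Fin 3)))) :
    ((Metric.sphere x1 1 ∩ Metric.sphere x2 1 ∩ Metric.sphere x3 1).encard = 2 ∨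
      ((Metric.sphere x1 1 ∩ Metric.sphere x2 1 ∩ Metric.sphere x3 1).encard = 1 ∧
        p ∈ affineSpan ℝ ({x1, x2, x3} : Set (EuclideanSpace ℝ (Fin 3))))) ∧
    (Metric.sphere x1 1 ∩ Metric.sphere x2 1 ∩ Metric.sphere x3 1).encard ≤ 2 := by
  rw [sphere_inter_sphere_inter_sphere_eq_pair finrank_euclideanSpace_fin hcol hp1 hp2 hp3]
  by_cases hp : p ∈ affineSpan ℝ ({x1, x2, x3} : Set (EuclideanSpace ℝ (Fin 3)))
  · simp [(reflection_eq_self_iff p).2 hp, hp]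
  · have hne : p ≠ reflection (affineSpan ℝ {x1, x2, x3}) p :=
      fun h ↦ hp ((reflection_eq_self_iff p).1 h.symm)
    simp [Set.encard_pair hne]

/-- Three unit spheres in ℝ³ with non-collinear centers, pairwise at
distance less than 2, having a common point p, meet in exactly two points, or in
exactly one point, the latter occurring only when p lies in the affine plane spanned
by the centers; in particular the triple intersection has at most two points. -/
theorem three_unit_spheres_at_most_two_points
    (x1 x2 x3 p : EuclideanSpace ℝ (Fin 3))
    (hd12 : dist x1 x2 < 2) (hd13 : dist x1 x3 < 2) (hd23 : dist x2 x3 < 2)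
    (hp1 : p ∈ Metric.sphere x1 1) (hp2 : p ∈ Metric.sphere x2 1)
    (hp3 : p ∈ Metric.sphere x3 1)
    (hcol : ¬ Collinear ℝ ({x1, x2, x3} : Set (EuclideanSpace ℝ (Fin 3)))) :
    ((Metric.sphere x1 1 ∩ Metric.sphere x2 1 ∩ Metric.sphere x3 1).encard = 2 ∨
      ((Metric.sphere x1 1 ∩ Metric.sphere x2 1 ∩ Metric.sphere x3 1).encard = 1 ∧
        p ∈ affineSpan ℝ ({x1, x2, x3} : Set (EuclideanSpace ℝ (Fin 3))))) ∧
    (Metric.sphere x1 1 ∩ Metric.sphere x2 1 ∩ Metric.sphere x3 1).encard ≤ 2 :=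
  three_unit_spheres_at_most_two_points_general x1 x2 x3 p hp1 hp2 hp3 hcol
end
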